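/- arXiv:1802.07044 — 2 statements merged into one kernel-verified Lean document; each statement's English description precedes it below -/
import Mathlib

section
/- The reparameterization gradient identity for Gaussian expectations (Bonnet's theorem, one dimension): if f : ℝ → ℝ is continuously differentiable with f and f' of at most polynomial growth, and θ ∼ N(μ, σ²), then ∂/∂μ E[f(θ)] = E[f'(θ)]. -/
/-! Translating by the mean, `∫ f dN(m, v) = ∫ f(x + m) dN(0, v)(x)`, moves the parameter from the
measure into the integrand, and the identity becomes differentiation under the integral sign.
Near `μ`, the derivatives `f'(x + m)` are dominated by a polynomial in `|x|`, which is integrable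
because Gaussians have moments of every order. -/

open Real MeasureTheory ProbabilityTheory

lemma one_add_abs_add_le_mul (x a : ℝ) : 1 + |x + a| ≤ (1 + |a|) * (1 + |x|) := by
  nlinarith [abs_add_le x a, abs_nonneg x, abs_nonneg a]

lemma abs_comp_add_le_of_abs_le {g : ℝ → ℝ} {C : ℝ} {k : ℕ}
    (hg : ∀ x, |g x| ≤ C * (1 + |x|) ^ k) {a r : ℝ} (ha : |a| ≤ r) (x : ℝ) :
    |g (x + a)| ≤ C * (1 + r) ^ k * (1 + |x|) ^ k := by
  have hC : 0 ≤ C := (abs_nonneg _).trans (by simpa using hg 0)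
  calc |g (x + a)| ≤ C * (1 + |x + a|) ^ k := hg _
    _ ≤ C * ((1 + r) * (1 + |x|)) ^ k := by
        gcongr
        exact (one_add_abs_add_le_mul x a).trans (by gcongr)
    _ = C * (1 + r) ^ k * (1 + |x|) ^ k := by rw [mul_pow, mul_assoc]

section FiniteMoments

variable {ν : Measure ℝ} [IsFiniteMeasure ν]

lemma integrable_one_add_abs_pow {k : ℕ} (hν : MemLp id k ν) :
    Integrable (fun x => (1 + |x|) ^ k) ν := by
  have h_one : MemLp (fun _ : ℝ => (1 : ℝ)) k ν := memLp_const 1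
  have h : MemLp (fun x : ℝ => 1 + |x|) k ν := h_one.add hν.abs
  refine h.integrable_norm_pow'.congr (ae_of_all _ fun x => ?_)
  simp only [norm_eq_abs]
  rw [abs_of_nonneg (by positivity)]

lemma integrable_of_abs_le_mul_one_add_abs_pow {g : ℝ → ℝ} (hg : AEStronglyMeasurable g ν)
    {C : ℝ} {k : ℕ} (hν : MemLp id k ν) (hbound : ∀ x, |g x| ≤ C * (1 + |x|) ^ k) :
    Integrable g ν :=
  ((integrable_one_add_abs_pow hν).const_mul C).mono' hg (ae_of_all _ hbound)

theorem hasDerivAt_integral_comp_add (hν : ∀ p : ℕ, MemLp id p ν) {f : ℝ → ℝ}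
    (hf : Differentiable ℝ f) {C : ℝ} {k : ℕ} (hf_growth : ∀ x, |f x| ≤ C * (1 + |x|) ^ k)
    {C' : ℝ} {k' : ℕ} (hf'_growth : ∀ x, |deriv f x| ≤ C' * (1 + |x|) ^ k') (μ : ℝ) :
    HasDerivAt (fun m => ∫ x, f (x + m) ∂ν) (∫ x, deriv f (x + μ) ∂ν) μ := by
  have hF_meas (m : ℝ) : AEStronglyMeasurable (fun x => f (x + m)) ν :=
    (hf.continuous.measurable.comp (measurable_add_const m)).aestronglyMeasurable
  have hF'_bound : ∀ x, ∀ m ∈ Metric.ball μ 1,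
      ‖deriv f (x + m)‖ ≤ C' * (1 + (|μ| + 1)) ^ k' * (1 + |x|) ^ k' := by
    intro x m hm
    refine abs_comp_add_le_of_abs_le hf'_growth ?_ x
    have := abs_sub_abs_le_abs_sub m μ
    rw [Metric.mem_ball, dist_eq] at hm
    linarith
  refine (hasDerivAt_integral_of_dominated_loc_of_deriv_le (Metric.ball_mem_nhds μ one_pos)
    (.of_forall hF_meas)
    (integrable_of_abs_le_mul_one_add_abs_pow (hF_meas μ) (hν k)
      (abs_comp_add_le_of_abs_le hf_growth le_rfl))
    ((measurable_deriv f).comp (measurable_add_const μ)).aestronglyMeasurable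
    (ae_of_all _ hF'_bound) ((integrable_one_add_abs_pow (hν k')).const_mul _)
    (ae_of_all _ fun x m _ => (hf (x + m)).hasDerivAt.comp_const_add x m)).2

end FiniteMoments

lemma integral_gaussianReal_eq_integral_comp_add (g : ℝ → ℝ) (m : ℝ) (v : NNReal) :
    ∫ x, g x ∂gaussianReal m v = ∫ x, g (x + m) ∂gaussianReal 0 v := by
  rw [← (measurableEmbedding_addRight m).integral_map, gaussianReal_map_add_const, zero_add]

theorem stmt17_general (f : ℝ → ℝ) (hf : ContDiff ℝ 1 f)
    (hf_growth : ∃ C k, ∀ x : ℝ, |f x| ≤ C * (1 + |x|) ^ k)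
    (hf'_growth : ∃ C k, ∀ x : ℝ, |deriv f x| ≤ C * (1 + |x|) ^ k)
    (σ : ℝ) (μ : ℝ) :
    HasDerivAt (fun m : ℝ => ∫ x, f x ∂(gaussianReal m (σ ^ 2).toNNReal))
      (∫ x, deriv f x ∂(gaussianReal μ (σ ^ 2).toNNReal)) μ := by
  obtain ⟨C, k, hf_bound⟩ := hf_growth
  obtain ⟨C', k', hf'_bound⟩ := hf'_growth
  rw [funext fun m => integral_gaussianReal_eq_integral_comp_add f m _,
    integral_gaussianReal_eq_integral_comp_add (deriv f)]
  exact hasDerivAt_integral_comp_add (fun p => memLp_id_gaussianReal p)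
    (hf.differentiable one_ne_zero) hf_bound hf'_bound μ

/-- Bonnet's theorem (reparameterization gradient identity) in
one dimension: if `f` is continuously differentiable with `f` and `f'` of at
most polynomial growth, and `θ ∼ N(μ, σ²)`, then
`∂/∂μ E[f(θ)] = E[f'(θ)]`. -/
theorem stmt17 (f : ℝ → ℝ) (hf : ContDiff ℝ 1 f)
    (hf_growth : ∃ C k, ∀ x : ℝ, |f x| ≤ C * (1 + |x|) ^ k)
    (hf'_growth : ∃ C k, ∀ x : ℝ, |deriv f x| ≤ C * (1 + |x|) ^ k)
    (σ : ℝ) (hσ : 0 < σ) (μ : ℝ) :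
    HasDerivAt (fun m : ℝ => ∫ x, f x ∂(gaussianReal m (σ ^ 2).toNNReal))
      (∫ x, deriv f x ∂(gaussianReal μ (σ ^ 2).toNNReal)) μ :=
  stmt17_general f hf hf_growth hf'_growth σ μ
end

section
/- Price's theorem in one dimension: if f : ℝ → ℝ is twice continuously differentiable with f, f', f'' of at most polynomial growth, and θ ∼ N(μ, σ²), then ∂/∂σ E[f(θ)] = E[ f'(θ) · (θ − μ)/σ ]. -/
open Real MeasureTheory ProbabilityTheory

/-! Writing `θ = σ Z + μ` with `Z` standard normal turns `E[f(θ)]` into `∫ f(s z + μ) dγ(z)`,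
which may be differentiated in `s` under the integral sign: the polynomial growth of `f'` gives a
dominating function `C (1 + |z|)^(k+1)` uniformly for `s` near `σ`, and Gaussians have all moments.
At `s = σ` the derivative `E[f'(σ Z + μ) Z]` is `E[f'(θ) (θ - μ) / σ]`. -/

lemma integrable_one_add_abs_pow_gaussianReal (m : ℝ) (v : NNReal) (k : ℕ) :
    Integrable (fun x : ℝ => (1 + |x|) ^ k) (gaussianReal m v) := by
  have hid : MemLp (id : ℝ → ℝ) k (gaussianReal m v) :=
    memLp_id_gaussianReal' _ (ENNReal.natCast_ne_top k)
  refine ((memLp_const (1 : ℝ)).add hid.norm).integrable_norm_pow'.congr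
    (ae_of_all _ fun x => ?_)
  simp only [Pi.add_apply, id, Real.norm_eq_abs]
  rw [abs_of_nonneg (by positivity)]

lemma integrable_gaussianReal_of_abs_le_mul_one_add_abs_pow {g : ℝ → ℝ} {m : ℝ} {v : NNReal}
    {C : ℝ} {k : ℕ} (hg : AEStronglyMeasurable g (gaussianReal m v))
    (hb : ∀ x, |g x| ≤ C * (1 + |x|) ^ k) :
    Integrable g (gaussianReal m v) :=
  ((integrable_one_add_abs_pow_gaussianReal m v k).const_mul C).mono' hg (ae_of_all _ hb)

lemma gaussianReal_map_const_mul_add (c m : ℝ) :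
    (gaussianReal 0 1).map (fun y => c * y + m) = gaussianReal m (c ^ 2).toNNReal := by
  have : (fun y => c * y + m) = (· + m) ∘ (c * ·) := rfl
  rw [this, ← Measure.map_map (measurable_add_const m) (measurable_const_mul c),
    gaussianReal_map_const_mul, gaussianReal_map_add_const, mul_zero, zero_add, mul_one,
    Real.toNNReal_of_nonneg (sq_nonneg c)]

lemma integral_gaussianReal_eq_integral_mul_add {E : Type*} [NormedAddCommGroup E]
    [NormedSpace ℝ E] {g : ℝ → E} (c m : ℝ)
    (hg : AEStronglyMeasurable g (gaussianReal m (c ^ 2).toNNReal)) :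
    ∫ x, g x ∂gaussianReal m (c ^ 2).toNNReal = ∫ y, g (c * y + m) ∂gaussianReal 0 1 := by
  rw [← gaussianReal_map_const_mul_add] at hg ⊢
  exact integral_map (by fun_prop) hg

lemma one_add_abs_mul_add_le {s R : ℝ} (hs : |s| ≤ R) (y m : ℝ) :
    1 + |s * y + m| ≤ (1 + R + |m|) * (1 + |y|) := by
  have := abs_add_le (s * y) m
  rw [abs_mul] at this
  nlinarith [abs_nonneg s, abs_nonneg y, abs_nonneg m,
    mul_le_mul_of_nonneg_right hs (abs_nonneg y)]

lemma abs_comp_mul_add_le {g : ℝ → ℝ} {C : ℝ} {k : ℕ} (hb : ∀ x, |g x| ≤ C * (1 + |x|) ^ k)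
    {s R : ℝ} (hs : |s| ≤ R) (y m : ℝ) :
    |g (s * y + m)| ≤ C * (1 + R + |m|) ^ k * (1 + |y|) ^ k := by
  have hC : 0 ≤ C := by simpa using (abs_nonneg _).trans (hb 0)
  calc |g (s * y + m)| ≤ C * (1 + |s * y + m|) ^ k := hb _
    _ ≤ C * ((1 + R + |m|) * (1 + |y|)) ^ k := by
        gcongr
        exact one_add_abs_mul_add_le hs y m
    _ = C * (1 + R + |m|) ^ k * (1 + |y|) ^ k := by rw [mul_pow, mul_assoc]

theorem hasDerivAt_integral_comp_mul_add_gaussianReal {f : ℝ → ℝ} (hf : Differentiable ℝ f)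
    (hf_growth : ∃ C k, ∀ x : ℝ, |f x| ≤ C * (1 + |x|) ^ k)
    (hf'_growth : ∃ C k, ∀ x : ℝ, |deriv f x| ≤ C * (1 + |x|) ^ k) (m σ : ℝ) :
    HasDerivAt (fun s => ∫ y, f (s * y + m) ∂gaussianReal 0 1)
      (∫ y, deriv f (σ * y + m) * y ∂gaussianReal 0 1) σ := by
  obtain ⟨C, k, hC⟩ := hf_growth
  obtain ⟨C', k', hC'⟩ := hf'_growth
  have hR : ∀ s ∈ Metric.ball σ 1, |s| ≤ |σ| + 1 := fun s hs => by
    have := abs_sub_abs_le_abs_sub s σ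
    rw [Metric.mem_ball, Real.dist_eq] at hs
    linarith
  refine (hasDerivAt_integral_of_dominated_loc_of_deriv_le (Metric.ball_mem_nhds σ one_pos)
    (F' := fun s y => deriv f (s * y + m) * y)
    (bound := fun y => C' * (1 + (|σ| + 1) + |m|) ^ k' * (1 + |y|) ^ (k' + 1))
    (.of_forall fun s => (hf.continuous.comp (by fun_prop)).aestronglyMeasurable)
    ?_ ?_ ?_ ((integrable_one_add_abs_pow_gaussianReal 0 1 _).const_mul _) ?_).2
  · exact integrable_gaussianReal_of_abs_le_mul_one_add_abs_pow
      (hf.continuous.comp (by fun_prop)).aestronglyMeasurable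
      fun y => abs_comp_mul_add_le hC le_rfl y m
  · exact ((measurable_deriv f).comp (by fun_prop)).mul measurable_id |>.aestronglyMeasurable
  · refine ae_of_all _ fun y s hs => ?_
    have h₁ := abs_comp_mul_add_le hC' (hR s hs) y m
    have h₂ : |y| ≤ 1 + |y| := by linarith
    calc ‖deriv f (s * y + m) * y‖ = |deriv f (s * y + m)| * |y| := abs_mul _ _
      _ ≤ C' * (1 + (|σ| + 1) + |m|) ^ k' * (1 + |y|) ^ k' * (1 + |y|) :=
          mul_le_mul h₁ h₂ (abs_nonneg y) ((abs_nonneg _).trans h₁)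
      _ = C' * (1 + (|σ| + 1) + |m|) ^ k' * (1 + |y|) ^ (k' + 1) := by ring
  · refine ae_of_all _ fun y s _ => ?_
    exact (hf (s * y + m)).hasDerivAt.comp s ((hasDerivAt_mul_const y).add_const m)

theorem stmt18_general (f : ℝ → ℝ) (hf : ContDiff ℝ 2 f)
    (hf_growth : ∃ C k, ∀ x : ℝ, |f x| ≤ C * (1 + |x|) ^ k)
    (hf'_growth : ∃ C k, ∀ x : ℝ, |deriv f x| ≤ C * (1 + |x|) ^ k)
    (μ σ : ℝ) (hσ : 0 < σ) :
    HasDerivAt (fun s : ℝ => ∫ x, f x ∂(gaussianReal μ (s ^ 2).toNNReal))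
      (∫ x, deriv f x * (x - μ) / σ ∂(gaussianReal μ (σ ^ 2).toNNReal)) σ := by
  have hdiff : Differentiable ℝ f := hf.differentiable two_ne_zero
  have hstd : (fun s : ℝ => ∫ x, f x ∂(gaussianReal μ (s ^ 2).toNNReal))
      = fun s => ∫ y, f (s * y + μ) ∂gaussianReal 0 1 :=
    funext fun s => integral_gaussianReal_eq_integral_mul_add s μ
      hdiff.continuous.aestronglyMeasurable
  have hval : ∫ x, deriv f x * (x - μ) / σ ∂(gaussianReal μ (σ ^ 2).toNNReal)
      = ∫ y, deriv f (σ * y + μ) * y ∂gaussianReal 0 1 := by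
    rw [integral_gaussianReal_eq_integral_mul_add (g := fun x => deriv f x * (x - μ) / σ) σ μ
      (((measurable_deriv f).mul (measurable_id.sub_const μ)).div_const σ).aestronglyMeasurable]
    congr with y
    field_simp
    ring
  rw [hstd, hval]
  exact hasDerivAt_integral_comp_mul_add_gaussianReal hdiff hf_growth hf'_growth μ σ

/-- Price's theorem in one dimension: if `f` is twice
continuously differentiable with `f`, `f'`, `f''` of at most polynomial
growth, and `θ ∼ N(μ, σ²)`, then
`∂/∂σ E[f(θ)] = E[f'(θ)·(θ-μ)/σ]`. -/
theorem stmt18 (f : ℝ → ℝ) (hf : ContDiff ℝ 2 f)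
    (hf_growth : ∃ C k, ∀ x : ℝ, |f x| ≤ C * (1 + |x|) ^ k)
    (hf'_growth : ∃ C k, ∀ x : ℝ, |deriv f x| ≤ C * (1 + |x|) ^ k)
    (hf''_growth : ∃ C k, ∀ x : ℝ, |deriv (deriv f) x| ≤ C * (1 + |x|) ^ k)
    (μ σ : ℝ) (hσ : 0 < σ) :
    HasDerivAt (fun s : ℝ => ∫ x, f x ∂(gaussianReal μ (s ^ 2).toNNReal))
      (∫ x, deriv f x * (x - μ) / σ ∂(gaussianReal μ (σ ^ 2).toNNReal)) σ :=
  stmt18_general f hf hf_growth hf'_growth μ σ hσ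
end
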